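/- For every ART (I, U) there exists an equivalent ART (J, V) satisfying: J = {List.replicate n false : n ∈ ℕ}; the family is decreasing, i.e., V j ⊆ V i whenever i, j ∈ J and i.length ≤ j.length; every x ∈ V j with j ∈ J satisfies x.length > j.length; and F(J, V) = F(I, U). -/

import Mathlib

open MeasureTheory Filter

/-- The fair-coin product probability measure on Cantor space `ℕ → Bool`,
constructed as the pushforward of Lebesgue measure on `[0,1)` under binary expansion. -/
noncomputable def mu : Measure (ℕ → Bool) :=
  Measure.map (fun x n => decide (⌊x * 2 ^ (n + 1)⌋ % 2 = 1))
    (volume.restrict (Set.Ico (0 : ℝ) 1))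

/-- Action of a word on a state of an automaton. -/
def act {S A : Type*} (f : S → A → S) (s : S) (w : List A) : S := w.foldl f s

/-- The run of a sequence `X` on the machine `(S, f, s₀)`. -/
def run {S : Type*} (f : S → Bool → S) (s₀ : S) (X : ℕ → Bool) : ℕ → S
  | 0 => s₀
  | n + 1 => f (run f s₀ X n) (X n)

/-- `t` is reachable from `s`. -/
def Reach {S : Type*} (f : S → Bool → S) (s t : S) : Prop := ∃ w : List Bool, act f s w = t

/-- The connected component of a state `s`. -/
def component {S : Type*} (f : S → Bool → S) (s : S) : Set S :=
  {t | Reach f s t ∧ Reach f t s}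

/-- `g` is a leaf connected component. -/
def IsLeafComponent {S : Type*} (f : S → Bool → S) (g : Set S) : Prop :=
  (∃ s, g = component f s) ∧ ∀ s ∈ g, ∀ t, Reach f s t → Reach f t s

/-- The word `w` occurs as a subword of the sequence `X`. -/
def Occurs (w : List Bool) (X : ℕ → Bool) : Prop :=
  ∃ n, ∀ k < w.length, X (n + k) = w.getD k false

/-- `X` is disjunctive: every word occurs in `X` as a subword. -/
def Disjunctive (X : ℕ → Bool) : Prop := ∀ w : List Bool, Occurs w X

/-- The word `w` is a prefix of the sequence `X`. -/
def IsPrefixOfSeq (w : List Bool) (X : ℕ → Bool) : Prop :=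
  ∀ k < w.length, X k = w.getD k false

/-- `[L]`: the set of sequences having some prefix in the language `L`. -/
def cyl (L : Set (List Bool)) : Set (ℕ → Bool) := {X | ∃ w ∈ L, IsPrefixOfSeq w X}

/-- `I(X)`: the set of states visited infinitely often by the run of `X`. -/
def InfOcc {S : Type*} (f : S → Bool → S) (s₀ : S) (X : ℕ → Bool) : Set S :=
  {s | ∃ᶠ n in atTop, run f s₀ X n = s}

/-- `X` is accepted by the deterministic Büchi automaton `(S, f, s₀, F)`. -/
def BuchiAccepts {S : Type*} (f : S → Bool → S) (s₀ : S) (F : Set S) (X : ℕ → Bool) : Prop :=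
  ∃ᶠ n in atTop, run f s₀ X n ∈ F

/-- A language is regular if it is accepted by a DFA with finitely many states. -/
def Regular {A : Type} (L : Set (List A)) : Prop :=
  ∃ (S : Type) (_ : Fintype S) (f : S → A → S) (s₀ : S) (F : Set S),
    L = {w | act f s₀ w ∈ F}

/-- The convolution of two words. -/
def conv (x i : List Bool) : List (Option Bool × Option Bool) :=
  (List.range (max x.length i.length)).map (fun k => (x[k]?, i[k]?))

/-- `(I, U)` is an automatic family. -/
def IsAutomaticFamily (I : Set (List Bool)) (U : List Bool → Set (List Bool)) : Prop :=
  Regular I ∧ Regular {c | ∃ i ∈ I, ∃ x ∈ U i, c = conv x i}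

/-- `(I, U)` is an automatic randomness test (ART). -/
def IsART (I : Set (List Bool)) (U : List Bool → Set (List Bool)) : Prop :=
  IsAutomaticFamily I U ∧ ∀ ε : ENNReal, 0 < ε → ∃ i ∈ I, mu (cyl (U i)) ≤ ε

/-- `(I, U)` is a Martin-Löf automatic randomness test (MART). -/
def IsMART (I : Set (List Bool)) (U : List Bool → Set (List Bool)) : Prop :=
  IsAutomaticFamily I U ∧ I.Infinite ∧
    ∀ i ∈ I, mu (cyl (U i)) ≤ (2 : ENNReal) ^ (-(i.length : ℤ))

/-- The covering region `F(I, U)` of a test. -/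
def coverRegion (I : Set (List Bool)) (U : List Bool → Set (List Bool)) : Set (ℕ → Bool) :=
  ⋂ i ∈ I, cyl (U i)

/-! Let `V (0^n)` consist of the words `x` longer than `n` such that every index `i ∈ I` with
`|i| ≤ n` has a prefix of `x` in `U i`. The shape conditions hold by construction,
`[V (0^|i|)] ⊆ [U i]` transfers the measure bound, and since only finitely many indices have
length `≤ n`, a long enough prefix of any `X ∈ F(I, U)` lies in `V (0^n)`; so the covering
regions agree.

The work is automaticity of `V`. Reading `conv x 0^n`, a finite automaton simulates the automata
of `I` and of `U` on all candidate indices `u` and all prefixes of `x` at once, a subset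
construction; an index is forgotten as soon as some prefix of `x` lands in its member of `U`. -/

theorem length_conv (x i : List Bool) : (conv x i).length = max x.length i.length := by
  simp [conv]

theorem conv_getElem? (x i : List Bool) (k : ℕ) :
    (conv x i)[k]? = if k < max x.length i.length then some (x[k]?, i[k]?) else none := by
  unfold conv
  split_ifs with hk
  · simp [List.getElem?_range hk]
  · rw [List.getElem?_map, List.getElem?_eq_none (by rw [List.length_range]; omega)]
    rfl

theorem conv_injective {x i x' i' : List Bool} (h : conv x i = conv x' i') : x = x' ∧ i = i' := by
  have hlen : max x.length i.length = max x'.length i'.length := by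
    simpa [length_conv] using congrArg List.length h
  have key : ∀ k : ℕ, x[k]? = x'[k]? ∧ i[k]? = i'[k]? := by
    intro k
    have hk := congrArg (·[k]?) h
    simp only [conv_getElem?, hlen] at hk
    split_ifs at hk with hlt
    · simpa using hk
    · have : x.length ≤ k ∧ i.length ≤ k ∧ x'.length ≤ k ∧ i'.length ≤ k := by omega
      simp [this]
  exact ⟨List.ext_getElem? fun k => (key k).1, List.ext_getElem? fun k => (key k).2⟩

theorem conv_append_singleton_left {x i : List Bool} (h : i.length ≤ x.length) (b : Bool) :
    conv (x ++ [b]) i = conv x i ++ [(some b, none)] := by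
  refine List.ext_getElem? fun k => ?_
  rw [List.getElem?_append, length_conv]
  simp only [conv_getElem?, List.getElem?_append, List.length_append, List.length_singleton,
    List.getElem?_singleton, Nat.sub_eq_zero_iff_le]
  split_ifs <;> simp_all <;> omega

theorem conv_append_singleton_right {x i : List Bool} (h : x.length ≤ i.length) (b : Bool) :
    conv x (i ++ [b]) = conv x i ++ [(none, some b)] := by
  refine List.ext_getElem? fun k => ?_
  rw [List.getElem?_append, length_conv]
  simp only [conv_getElem?, List.getElem?_append, List.length_append, List.length_singleton,
    List.getElem?_singleton, Nat.sub_eq_zero_iff_le]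
  split_ifs <;> simp_all <;> omega

theorem conv_append_singleton {x i : List Bool} (h : i.length = x.length) (b b' : Bool) :
    conv (x ++ [b]) (i ++ [b']) = conv x i ++ [(some b, some b')] := by
  refine List.ext_getElem? fun k => ?_
  rw [List.getElem?_append, length_conv]
  simp only [conv_getElem?, List.getElem?_append, List.length_append, List.length_singleton,
    List.getElem?_singleton, Nat.sub_eq_zero_iff_le]
  split_ifs <;> simp_all <;> omega

theorem regular_iff_isRegular {α : Type} {L : Set (List α)} :
    Regular L ↔ Language.IsRegular (L : Language α) :=
  ⟨fun ⟨S, hS, f, s₀, F, hL⟩ => ⟨S, hS, ⟨f, s₀, F⟩, hL.symm⟩,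
    fun ⟨S, hS, M, hM⟩ => ⟨S, hS, M.step, M.start, M.accept, hM.symm⟩⟩

theorem conv_mem_iff {I : Set (List Bool)} {U : List Bool → Set (List Bool)} {w i : List Bool} :
    conv w i ∈ {c | ∃ i ∈ I, ∃ x ∈ U i, c = conv x i} ↔ i ∈ I ∧ w ∈ U i := by
  constructor
  · rintro ⟨i', hi', w', hw', heq⟩
    obtain ⟨rfl, rfl⟩ := conv_injective heq
    exact ⟨hi', hw'⟩
  · rintro ⟨hi, hw⟩
    exact ⟨i, hi, w, hw, rfl⟩

def unaryIndices : Set (List Bool) := {w | ∃ n : ℕ, w = List.replicate n false}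

theorem replicate_mem_unaryIndices (n : ℕ) : List.replicate n false ∈ unaryIndices := ⟨n, rfl⟩

theorem act_and_not (w : List Bool) (s : Bool) :
    act (fun s b => s && !b) s w = (s && w.all (! ·)) := by
  induction w generalizing s with
  | nil => simp [act]
  | cons a w ih => exact (ih (s && !a)).trans (by simp [Bool.and_assoc])

theorem regular_unaryIndices : Regular unaryIndices := by
  refine ⟨Bool, inferInstance, fun s b => s && !b, true, {true}, ?_⟩
  ext w
  simp [unaryIndices, act_and_not, List.eq_replicate_iff]

def prefixCover (I : Set (List Bool)) (U : List Bool → Set (List Bool)) (j : List Bool) :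
    Set (List Bool) :=
  {x | j.length < x.length ∧ ∀ i ∈ I, i.length ≤ j.length → ∃ w, w <+: x ∧ w ∈ U i}

theorem prefixCover_congr {I : Set (List Bool)} {U U' : List Bool → Set (List Bool)}
    (h : ∀ i ∈ I, U i = U' i) : prefixCover I U = prefixCover I U' := by
  ext j x
  simp +contextual [prefixCover, h]

theorem prefixCover_antitone {I : Set (List Bool)} {U : List Bool → Set (List Bool)}
    {j j' : List Bool} (h : j.length ≤ j'.length) : prefixCover I U j' ⊆ prefixCover I U j :=
  fun _ ⟨hlen, hcov⟩ => ⟨h.trans_lt hlen, fun i hi hij => hcov i hi (hij.trans h)⟩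

namespace PrefixCoverDFA

variable {Q R : Type} (A : DFA (Option Bool × Option Bool) Q) (B : DFA Bool R)

/- After `conv x 0^|x|` an index `u` that may still grow (`|u| = |x|`) is stored as a triple
in `liveTriples`: the state of `B` on `u`, the state of `A` on `conv x u`, and the states of `A`
on `conv w u` for the proper prefixes `w` of `x`, which from now on read only letters
`(none, _)`. A complete index `u ∈ B.accepts` of length `≤ n` with no accepted `conv w u` yet
is stored in `unmatchedStates` by the state of `A` on `conv x u` alone. -/

def pendingStates (x u : List Bool) : Set Q :=
  {s | ∃ w, w <+: x ∧ w ≠ x ∧ s = A.eval (conv w u)}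

def liveTriples (x : List Bool) : Set (R × Q × Set Q) :=
  {p | ∃ u : List Bool, u.length = x.length ∧
    p = (B.eval u, A.eval (conv x u), pendingStates A x u)}

def unmatchedStates (x : List Bool) (n : ℕ) : Set Q :=
  {q | ∃ u ∈ B.accepts, u.length ≤ n ∧ (∀ w, w <+: x → conv w u ∉ A.accepts) ∧
    q = A.eval (conv x u)}

def stepLive (b : Bool) (C : Set (R × Q × Set Q)) : Set (R × Q × Set Q) :=
  {p | ∃ c ∈ C, ∃ b' : Bool, p = (B.step c.1 b', A.step c.2.1 (some b, some b'),
    (A.step · (none, some b')) '' insert c.2.1 c.2.2)}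

def stepUnmatched (b : Bool) (D : Set Q) : Set Q :=
  (A.step · (some b, none)) '' D \ A.accept

def newlyUnmatched (C : Set (R × Q × Set Q)) : Set Q :=
  {q | ∃ c ∈ C, c.1 ∈ B.accept ∧ insert c.2.1 c.2.2 ∩ A.accept = ∅ ∧ q = c.2.1}

/- The `Bool` records whether the block of letters `(some b, none)` has started; `none` is the
rejecting sink. -/
abbrev State (Q R : Type) : Type := Option (Set (R × Q × Set Q) × Set Q × Bool)

def step : State Q R → Option Bool × Option Bool → State Q R
  | some (_, D, _), (some b, none) => some (∅, stepUnmatched A b D, true)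
  | some (C, D, false), (some b, some false) =>
      some (stepLive A B b C, stepUnmatched A b D ∪ newlyUnmatched A B (stepLive A B b C), false)
  | _, _ => none

def stateAfter (x : List Bool) (n : ℕ) : Set (R × Q × Set Q) × Set Q × Bool :=
  (if n < x.length then ∅ else liveTriples A B x, unmatchedStates A B x n, decide (n < x.length))

def dfa : DFA (Option Bool × Option Bool) (State Q R) where
  step := step A B
  start := some (stateAfter A B [] 0)
  accept := {s | ∃ C, s = some (C, ∅, true)}

variable {A B}

theorem exists_of_step_eq_some {s : State Q R} {ℓ : Option Bool × Option Bool} {s'}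
    (h : step A B s ℓ = some s') : ∃ C D ph b, s = some (C, D, ph) ∧
      (ℓ = (some b, none) ∨ ph = false ∧ ℓ = (some b, some false)) := by
  rcases s with _ | ⟨C, D, _ | _⟩ <;> rcases ℓ with ⟨_ | _ | _, _ | _ | _⟩ <;> simp_all [step]

theorem pendingStates_append {x u : List Bool} (hu : u.length = x.length) (b b' : Bool) :
    pendingStates A (x ++ [b]) (u ++ [b']) =
      (A.step · (none, some b')) '' insert (A.eval (conv x u)) (pendingStates A x u) := by
  have hconv : ∀ w, w <+: x → conv w (u ++ [b']) = conv w u ++ [(none, some b')] :=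
    fun w hw => conv_append_singleton_right (hu ▸ hw.length_le) b'
  ext s
  simp only [pendingStates, Set.image_insert_eq, Set.mem_insert_iff, Set.mem_image,
    Set.mem_ofPred_eq]
  constructor
  · rintro ⟨w, hw, hne, rfl⟩
    have hw : w <+: x := (List.prefix_concat_iff.mp hw).resolve_left hne
    rw [hconv w hw, DFA.eval_append_singleton]
    by_cases hwx : w = x
    · exact Or.inl (by rw [hwx])
    · exact Or.inr ⟨_, ⟨w, hw, hwx, rfl⟩, rfl⟩
  · have hne : ∀ w, w <+: x → w ≠ x ++ [b] := fun w hw h => by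
      simpa [h] using hw.length_le
    rintro (rfl | ⟨_, ⟨w, hw, -, rfl⟩, rfl⟩)
    · exact ⟨x, List.prefix_append _ _, hne x List.prefix_rfl,
        by rw [hconv x List.prefix_rfl, DFA.eval_append_singleton]⟩
    · exact ⟨w, hw.trans (List.prefix_append _ _), hne w hw,
        by rw [hconv w hw, DFA.eval_append_singleton]⟩

theorem stepLive_liveTriples (x : List Bool) (b : Bool) :
    stepLive A B b (liveTriples A B x) = liveTriples A B (x ++ [b]) := by
  ext p
  simp only [stepLive, liveTriples, Set.mem_ofPred_eq]
  constructor
  · rintro ⟨_, ⟨u, hu, rfl⟩, b', rfl⟩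
    refine ⟨u ++ [b'], by simp [hu], ?_⟩
    rw [DFA.eval_append_singleton, conv_append_singleton hu, DFA.eval_append_singleton,
      pendingStates_append hu]
  · rintro ⟨u', hu', rfl⟩
    rcases u'.eq_nil_or_concat with rfl | ⟨u, b', rfl⟩
    · simp at hu'
    rw [List.concat_eq_append] at hu' ⊢
    have hu : u.length = x.length := by simpa using hu'
    refine ⟨_, ⟨u, hu, rfl⟩, b', ?_⟩
    rw [DFA.eval_append_singleton, conv_append_singleton hu, DFA.eval_append_singleton,
      pendingStates_append hu]

theorem stepUnmatched_unmatchedStates {x : List Bool} {n : ℕ} (hn : n ≤ x.length) (b : Bool) :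
    stepUnmatched A b (unmatchedStates A B x n) = unmatchedStates A B (x ++ [b]) n := by
  have heval : ∀ u : List Bool, u.length ≤ n →
      A.eval (conv (x ++ [b]) u) = A.step (A.eval (conv x u)) (some b, none) := fun u hu => by
    rw [conv_append_singleton_left (by omega), DFA.eval_append_singleton]
  ext q
  simp only [stepUnmatched, unmatchedStates, List.prefix_concat_iff, Set.mem_sdiff, Set.mem_image,
    Set.mem_ofPred_eq]
  constructor
  · rintro ⟨⟨_, ⟨u, hu, hun, hnot, rfl⟩, rfl⟩, hacc⟩
    refine ⟨u, hu, hun, ?_, (heval u hun).symm⟩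
    rintro w (rfl | hw)
    · rwa [DFA.mem_accepts, heval u hun]
    · exact hnot w hw
  · rintro ⟨u, hu, hun, hnot, rfl⟩
    refine ⟨⟨_, ⟨u, hu, hun, fun w hw => hnot w (Or.inr hw), rfl⟩, (heval u hun).symm⟩, ?_⟩
    exact hnot _ (Or.inl rfl)

theorem insert_pendingStates_inter_accept_eq_empty {x u : List Bool} :
    insert (A.eval (conv x u)) (pendingStates A x u) ∩ A.accept = ∅ ↔
      ∀ w, w <+: x → conv w u ∉ A.accepts := by
  simp only [Set.eq_empty_iff_forall_notMem, Set.mem_inter_iff, Set.mem_insert_iff, pendingStates,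
    Set.mem_ofPred_eq, not_and, DFA.mem_accepts]
  constructor
  · intro h w hw
    by_cases hwx : w = x
    · exact h _ (Or.inl (by rw [hwx]))
    · exact h _ (Or.inr ⟨w, hw, hwx, rfl⟩)
  · rintro h _ (rfl | ⟨w, hw, -, rfl⟩)
    · exact h x List.prefix_rfl
    · exact h w hw

theorem unmatchedStates_succ {x : List Bool} {n : ℕ} (hx : x.length = n + 1) :
    unmatchedStates A B x (n + 1) =
      unmatchedStates A B x n ∪ newlyUnmatched A B (liveTriples A B x) := by
  ext q
  simp only [unmatchedStates, newlyUnmatched, liveTriples, Set.mem_union, Set.mem_ofPred_eq]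
  constructor
  · rintro ⟨u, hu, hun, hnot, rfl⟩
    rcases Nat.lt_or_ge u.length (n + 1) with hlt | hge
    · exact Or.inl ⟨u, hu, by omega, hnot, rfl⟩
    · exact Or.inr ⟨_, ⟨u, by omega, rfl⟩, hu,
        insert_pendingStates_inter_accept_eq_empty.mpr hnot, rfl⟩
  · rintro (⟨u, hu, hun, hnot, rfl⟩ | ⟨_, ⟨u, hun, rfl⟩, hu, hnot, rfl⟩)
    · exact ⟨u, hu, by omega, hnot, rfl⟩
    · exact ⟨u, hu, by omega, insert_pendingStates_inter_accept_eq_empty.mp hnot, rfl⟩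

theorem step_stateAfter_padding {x : List Bool} {n : ℕ} (hn : n ≤ x.length) (b : Bool) :
    step A B (some (stateAfter A B x n)) (some b, none) = some (stateAfter A B (x ++ [b]) n) := by
  simp [step, stateAfter, stepUnmatched_unmatchedStates hn, Nat.lt_succ_of_le hn]

theorem step_stateAfter_index (x : List Bool) (b : Bool) :
    step A B (some (stateAfter A B x x.length)) (some b, some false) =
      some (stateAfter A B (x ++ [b]) (x.length + 1)) := by
  simp [step, stateAfter, stepLive_liveTriples, stepUnmatched_unmatchedStates le_rfl,
    unmatchedStates_succ (x := x ++ [b]) (n := x.length) (by simp)]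

theorem eval_conv_replicate {x : List Bool} {n : ℕ} (hn : n ≤ x.length) :
    (dfa A B).eval (conv x (List.replicate n false)) = some (stateAfter A B x n) := by
  induction x using List.reverseRecOn generalizing n with
  | nil =>
    obtain rfl : n = 0 := by simpa using hn
    simp [conv, dfa]
  | append_singleton x b ih =>
    rcases Nat.lt_or_ge x.length n with hlt | hle
    · obtain rfl : n = x.length + 1 := by
        simp only [List.length_append, List.length_singleton] at hn; omega
      rw [List.replicate_succ', conv_append_singleton (by simp), DFA.eval_append_singleton,
        ih le_rfl]
      exact step_stateAfter_index x b
    · rw [conv_append_singleton_left (by simpa using hle), DFA.eval_append_singleton, ih hle]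
      exact step_stateAfter_padding hle b

theorem exists_of_eval_eq_some {c : List (Option Bool × Option Bool)}
    {s : Set (R × Q × Set Q) × Set Q × Bool} (h : (dfa A B).eval c = some s) :
    ∃ x n, n ≤ x.length ∧ c = conv x (List.replicate n false) ∧ s = stateAfter A B x n := by
  induction c using List.reverseRecOn generalizing s with
  | nil => exact ⟨[], 0, le_rfl, by simp [conv], (Option.some_injective _ h).symm⟩
  | append_singleton c ℓ ih =>
    rw [DFA.eval_append_singleton] at h
    obtain ⟨C, D, ph, b, hc, hℓ⟩ := exists_of_step_eq_some h
    obtain ⟨x, n, hn, rfl, hs⟩ := ih hc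
    rw [hc, hs] at h
    rcases hℓ with rfl | ⟨rfl, rfl⟩
    · refine ⟨x ++ [b], n, by simp only [List.length_append, List.length_singleton]; omega,
        (conv_append_singleton_left (by simpa using hn) b).symm, ?_⟩
      exact Option.some_injective _ (h.symm.trans (step_stateAfter_padding hn b))
    · obtain rfl : n = x.length := by
        have : x.length ≤ n := by simpa [stateAfter] using congrArg (·.2.2) hs
        omega
      refine ⟨x ++ [b], x.length + 1, by simp, ?_, ?_⟩
      · rw [List.replicate_succ', conv_append_singleton (by simp)]
      · exact Option.some_injective _ (h.symm.trans (step_stateAfter_index x b))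

theorem unmatchedStates_eq_empty_iff {x : List Bool} {n : ℕ} :
    unmatchedStates A B x n = ∅ ↔
      ∀ u ∈ B.accepts, u.length ≤ n → ∃ w, w <+: x ∧ conv w u ∈ A.accepts := by
  simp only [unmatchedStates, Set.eq_empty_iff_forall_notMem, Set.mem_ofPred_eq]
  constructor
  · intro h u hu hun
    by_contra! hnot
    exact h _ ⟨u, hu, hun, hnot, rfl⟩
  · rintro h _ ⟨u, hu, hun, hnot, rfl⟩
    obtain ⟨w, hw, hacc⟩ := h u hu hun
    exact hnot w hw hacc

theorem accepts_dfa : (dfa A B).accepts =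
    {c | ∃ j ∈ unaryIndices, ∃ x ∈ prefixCover B.accepts (fun u => {w | conv w u ∈ A.accepts}) j,
      c = conv x j} := by
  ext c
  constructor
  · intro hc
    obtain ⟨C, hc⟩ := (dfa A B).mem_accepts.mp hc
    obtain ⟨x, n, -, rfl, hs⟩ := exists_of_eval_eq_some hc
    simp only [stateAfter, Prod.mk.injEq] at hs
    obtain ⟨-, hD, hn⟩ := hs
    exact ⟨_, replicate_mem_unaryIndices n, x,
      ⟨by simpa using hn.symm, fun u hu hun =>
        unmatchedStates_eq_empty_iff.mp hD.symm u hu (by simpa using hun)⟩, rfl⟩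
  · rintro ⟨_, ⟨n, rfl⟩, x, ⟨hn, hcov⟩, rfl⟩
    rw [List.length_replicate] at hn hcov
    refine (dfa A B).mem_accepts.mpr ⟨∅, ?_⟩
    rw [eval_conv_replicate hn.le]
    simp [stateAfter, hn, unmatchedStates_eq_empty_iff.mpr hcov]

end PrefixCoverDFA

theorem isAutomaticFamily_prefixCover {I : Set (List Bool)} {U : List Bool → Set (List Bool)}
    (h : IsAutomaticFamily I U) : IsAutomaticFamily unaryIndices (prefixCover I U) := by
  refine ⟨regular_unaryIndices, ?_⟩
  obtain ⟨R, _, B, hB⟩ := regular_iff_isRegular.mp h.1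
  obtain ⟨Q, _, A, hA⟩ := regular_iff_isRegular.mp h.2
  have hU : prefixCover I U = prefixCover B.accepts (fun u => {w | conv w u ∈ A.accepts}) := by
    rw [hB, hA]
    exact prefixCover_congr fun u hu =>
      Set.ext fun w => (conv_mem_iff.trans (and_iff_right hu)).symm
  rw [hU]
  exact regular_iff_isRegular.mpr
    ⟨_, Fintype.ofFinite _, PrefixCoverDFA.dfa A B, PrefixCoverDFA.accepts_dfa⟩

def seqPrefix (X : ℕ → Bool) (N : ℕ) : List Bool := List.ofFn fun k : Fin N => X k

theorem length_seqPrefix (X : ℕ → Bool) (N : ℕ) : (seqPrefix X N).length = N := by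
  simp [seqPrefix]

theorem isPrefixOfSeq_seqPrefix (X : ℕ → Bool) (N : ℕ) : IsPrefixOfSeq (seqPrefix X N) X := by
  intro k hk
  rw [List.getD_eq_getElem _ _ hk]
  simp [seqPrefix]

theorem IsPrefixOfSeq.of_prefix {w x : List Bool} {X : ℕ → Bool} (hwx : w <+: x)
    (hx : IsPrefixOfSeq x X) : IsPrefixOfSeq w X := by
  intro k hk
  rw [hx k (hk.trans_le hwx.length_le), List.getD_eq_getElem _ _ hk,
    List.getD_eq_getElem _ _ (hk.trans_le hwx.length_le), hwx.getElem hk]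

theorem IsPrefixOfSeq.prefix_seqPrefix {w : List Bool} {X : ℕ → Bool} (hw : IsPrefixOfSeq w X)
    {N : ℕ} (hN : w.length ≤ N) : w <+: seqPrefix X N := by
  rw [List.prefix_iff_eq_take]
  refine List.ext_getElem (by simp [length_seqPrefix, hN]) fun k hk _ => ?_
  have hXk := hw k hk
  rw [List.getD_eq_getElem _ _ hk] at hXk
  simp [seqPrefix, hXk]

theorem cyl_prefixCover_subset {I : Set (List Bool)} {U : List Bool → Set (List Bool)}
    {i j : List Bool} (hi : i ∈ I) (hij : i.length ≤ j.length) :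
    cyl (prefixCover I U j) ⊆ cyl (U i) := by
  rintro X ⟨x, ⟨-, hcov⟩, hxX⟩
  obtain ⟨w, hwx, hw⟩ := hcov i hi hij
  exact ⟨w, hw, hxX.of_prefix hwx⟩

theorem mem_cyl_prefixCover {I : Set (List Bool)} {U : List Bool → Set (List Bool)}
    {X : ℕ → Bool} (hX : X ∈ coverRegion I U) (j : List Bool) : X ∈ cyl (prefixCover I U j) := by
  have hfin : {i | i ∈ I ∧ i.length ≤ j.length}.Finite :=
    (List.finite_length_le Bool j.length).subset fun _ hi => hi.2
  have hN : ∀ᶠ N in atTop, j.length < N ∧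
      ∀ i ∈ {i | i ∈ I ∧ i.length ≤ j.length}, ∃ w ∈ U i, IsPrefixOfSeq w X ∧ w.length ≤ N := by
    refine (eventually_gt_atTop _).and ((eventually_all_finite hfin).2 fun i hi => ?_)
    obtain ⟨w, hw, hwX⟩ := Set.mem_iInter₂.mp hX i hi.1
    exact (eventually_ge_atTop w.length).mono fun N hN => ⟨w, hw, hwX, hN⟩
  obtain ⟨N, hjN, hcov⟩ := hN.exists
  refine ⟨seqPrefix X N, ⟨by rwa [length_seqPrefix], fun i hi hij => ?_⟩,
    isPrefixOfSeq_seqPrefix X N⟩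
  obtain ⟨w, hw, hwX, hwN⟩ := hcov i ⟨hi, hij⟩
  exact ⟨w, hwX.prefix_seqPrefix hwN, hw⟩

theorem coverRegion_prefixCover (I : Set (List Bool)) (U : List Bool → Set (List Bool)) :
    coverRegion unaryIndices (prefixCover I U) = coverRegion I U := by
  refine Set.Subset.antisymm (fun X hX => Set.mem_iInter₂.mpr fun i hi => ?_)
    (fun X hX => Set.mem_iInter₂.mpr fun j _ => mem_cyl_prefixCover hX j)
  exact cyl_prefixCover_subset hi (by simp)
    (Set.mem_iInter₂.mp hX _ (replicate_mem_unaryIndices i.length))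

/-- Every ART has an equivalent ART indexed by `{0^n : n ∈ ℕ}` which is
decreasing and whose `j`-th member contains only words longer than `j`. -/
theorem stmt14 (I : Set (List Bool)) (U : List Bool → Set (List Bool)) (h : IsART I U) :
    ∃ (J : Set (List Bool)) (V : List Bool → Set (List Bool)),
      IsART J V ∧
      J = {w : List Bool | ∃ n : ℕ, w = List.replicate n false} ∧
      (∀ i ∈ J, ∀ j ∈ J, i.length ≤ j.length → V j ⊆ V i) ∧
      (∀ j ∈ J, ∀ x ∈ V j, x.length > j.length) ∧
      coverRegion J V = coverRegion I U := by
  refine ⟨unaryIndices, prefixCover I U, ⟨isAutomaticFamily_prefixCover h.1, fun ε hε => ?_⟩, rfl,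
    fun i _ j _ hij => prefixCover_antitone hij, fun j _ x hx => hx.1, coverRegion_prefixCover I U⟩
  obtain ⟨i, hi, hμ⟩ := h.2 ε hε
  exact ⟨_, replicate_mem_unaryIndices i.length,
    (measure_mono (cyl_prefixCover_subset hi (List.length_replicate ..).ge)).trans hμ⟩
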